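/- arXiv:1205.3321 — 4 statements merged into one kernel-verified Lean document; each statement's English description precedes it below -/
import Mathlib

section
/- Any two cores of a finite relational structure are isomorphic. -/
/-!
Fix homomorphisms `p : Q → C₁` and `q : Q → C₂`. By minimality, every homomorphism from `Q` into
a core `C` maps `C` onto itself, so on the finite vertex set of `C` it is a permutation and some
iterate of it fixes that set pointwise. Choosing `m + 1` to be a common such period of `p ∘ q` on
`C₁` and of `q ∘ p` on `C₂`, the maps `q` and `(p ∘ q)^[m] ∘ p` are mutually inverse.
-/

structure Atom (σ : Type*) (ρ : σ → ℕ) (V : Type*) where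
  rel : σ
  args : Fin (ρ rel) → V

variable {σ : Type*} {ρ : σ → ℕ} {V W : Type*}

def Atom.map (h : V → W) (a : Atom σ ρ V) : Atom σ ρ W :=
  ⟨a.rel, h ∘ a.args⟩

def Atom.vars (a : Atom σ ρ V) : Set V := Set.range a.args

def qvars (Q : Set (Atom σ ρ V)) : Set V := ⋃ a ∈ Q, a.vars

def IsHom (h : V → W) (Q : Set (Atom σ ρ V)) (D : Set (Atom σ ρ W)) : Prop :=
  ∀ a ∈ Q, a.map h ∈ D

def IsCore (Q C : Set (Atom σ ρ V)) : Prop :=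
  C ⊆ Q ∧ (∃ h : V → V, IsHom h Q C) ∧
    ∀ C' ⊆ C, (∃ h : V → V, IsHom h Q C') → C' = C

open Function Set

lemma Set.BijOn.exists_isPeriodicPt {α : Type*} {S : Set α} (hS : S.Finite) {φ : α → α}
    (h : BijOn φ S S) : ∃ n, 0 < n ∧ ∀ x ∈ S, IsPeriodicPt φ n x := by
  have := hS.fintype
  have hinj : Injective (h.mapsTo.restrict φ S S) := h.mapsTo.restrict_inj.mpr h.injOn
  refine ⟨(Fintype.card S).factorial, Nat.factorial_pos _, fun x hx => ?_⟩
  have hid := congrFun (injective_iff_iterate_factorial_card_eq_id.mp hinj) ⟨x, hx⟩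
  exact (h.mapsTo.coe_iterate_restrict ⟨x, hx⟩ _).symm.trans (congrArg Subtype.val hid)

lemma mem_qvars_iff {x : V} {C : Set (Atom σ ρ V)} :
    x ∈ qvars C ↔ ∃ a ∈ C, ∃ i, a.args i = x := by
  simp [qvars, Atom.vars]

lemma Set.Finite.qvars {C : Set (Atom σ ρ V)} (hC : C.Finite) : (qvars C).Finite :=
  hC.biUnion fun a _ => finite_range a.args

namespace IsHom

variable {U : Type*} {A A' : Set (Atom σ ρ V)}

lemma comp {f : V → W} {g : W → U} {D : Set (Atom σ ρ W)} {E : Set (Atom σ ρ U)}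
    (hg : IsHom g D E) (hf : IsHom f A D) : IsHom (g ∘ f) A E :=
  fun a ha => hg _ (hf a ha)

lemma mono {f : V → W} {D : Set (Atom σ ρ W)} (hf : IsHom f A D) (h : A' ⊆ A) :
    IsHom f A' D :=
  fun a ha => hf a (h ha)

lemma iterate {φ : V → V} (h : IsHom φ A A) : ∀ n : ℕ, IsHom φ^[n] A A
  | 0 => fun _ ha => ha
  | n + 1 => (h.iterate n).comp h

lemma mapsTo_qvars {f : V → W} {D : Set (Atom σ ρ W)} (hf : IsHom f A D) :
    MapsTo f (qvars A) (qvars D) := by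
  intro x hx
  obtain ⟨a, ha, i, rfl⟩ := mem_qvars_iff.mp hx
  exact mem_qvars_iff.mpr ⟨a.map f, hf a ha, i, rfl⟩

end IsHom

namespace IsCore

variable {Q C : Set (Atom σ ρ V)}

lemma image_map_eq (hc : IsCore Q C) {φ : V → V} (hφ : IsHom φ Q C) :
    Atom.map φ '' C = C := by
  obtain ⟨hCQ, ⟨h, hh⟩, hmin⟩ := hc
  refine hmin _ ?_ ⟨φ ∘ h, fun a ha => ⟨a.map h, hh a ha, rfl⟩⟩
  rintro _ ⟨a, ha, rfl⟩
  exact hφ a (hCQ ha)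

lemma surjOn_qvars (hc : IsCore Q C) {φ : V → V} (hφ : IsHom φ Q C) :
    SurjOn φ (qvars C) (qvars C) := by
  intro x hx
  obtain ⟨a, ha, i, rfl⟩ := mem_qvars_iff.mp hx
  rw [← hc.image_map_eq hφ] at ha
  obtain ⟨b, hb, rfl⟩ := ha
  exact ⟨b.args i, mem_qvars_iff.mpr ⟨b, hb, i, rfl⟩, rfl⟩

lemma bijOn_qvars (hfin : Q.Finite) (hc : IsCore Q C) {φ : V → V} (hφ : IsHom φ Q C) :
    BijOn φ (qvars C) (qvars C) :=
  ((hfin.subset hc.1).qvars.surjOn_iff_bijOn_of_mapsTo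
    ((hφ.mono hc.1).mapsTo_qvars)).mp (hc.surjOn_qvars hφ)

lemma exists_isPeriodicPt (hfin : Q.Finite) (hc : IsCore Q C) {φ : V → V}
    (hφ : IsHom φ Q C) : ∃ n, 0 < n ∧ ∀ x ∈ qvars C, IsPeriodicPt φ n x :=
  (hc.bijOn_qvars hfin hφ).exists_isPeriodicPt (hfin.subset hc.1).qvars

end IsCore

/-- any two cores of a finite relational structure are isomorphic:
there are mutually inverse homomorphisms between them. -/
theorem stmt3 {σ : Type*} {ρ : σ → ℕ} {V : Type*} (Q C₁ C₂ : Set (Atom σ ρ V))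
    (hfin : Q.Finite) (h₁ : IsCore Q C₁) (h₂ : IsCore Q C₂) :
    ∃ f g : V → V, IsHom f C₁ C₂ ∧ IsHom g C₂ C₁ ∧
      (∀ x ∈ qvars C₁, g (f x) = x) ∧ (∀ y ∈ qvars C₂, f (g y) = y) := by
  obtain ⟨p, hp⟩ := h₁.2.1
  obtain ⟨q, hq⟩ := h₂.2.1
  have hpq : IsHom (p ∘ q) Q C₁ := (hp.mono h₂.1).comp hq
  have hqp : IsHom (q ∘ p) Q C₂ := (hq.mono h₁.1).comp hp
  obtain ⟨n₁, hn₁, hper₁⟩ := h₁.exists_isPeriodicPt hfin hpq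
  obtain ⟨n₂, hn₂, hper₂⟩ := h₂.exists_isPeriodicPt hfin hqp
  obtain ⟨m, hm⟩ : ∃ m, n₁ * n₂ = m + 1 := Nat.exists_eq_add_one.mpr (Nat.mul_pos hn₁ hn₂)
  refine ⟨q, (p ∘ q)^[m] ∘ p, hq.mono h₁.1, ((hpq.mono h₁.1).iterate m).comp (hp.mono h₂.1),
    fun x hx => ?_, fun y hy => ?_⟩
  · have := ((hper₁ x hx).mul_const n₂).eq
    rwa [hm, iterate_succ_apply] at this
  · have := ((hper₂ y hy).mul_const n₁).eq
    rw [mul_comm, hm, iterate_succ_apply] at this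
    have hsemiconj : Semiconj q (p ∘ q) (q ∘ p) := fun _ => rfl
    exact ((hsemiconj.iterate_right m).eq (p y)).trans this
end

section
/- Let Q' be a core of Q, let q be an atom of Q', and let O ⊆ vars(q). Then Q' extended with a fresh atom atom(O) over exactly the variables O (with a fresh relation symbol) is a core of Q extended with atom(O). -/
variable {σ : Type*} {ρ : σ → ℕ} {V W : Type*}

theorem Function.Surjective.exists_iterate_eq_id {α : Type*} [Finite α] {f : α → α}
    (hf : Function.Surjective f) : ∃ n, 0 < n ∧ f^[n] = id := by
  let e : Equiv.Perm α := Equiv.ofBijective f ⟨Finite.injective_iff_surjective.mpr hf, hf⟩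
  refine ⟨orderOf e, orderOf_pos e, ?_⟩
  change (⇑e)^[orderOf e] = id
  rw [← Equiv.Perm.coe_pow e, pow_orderOf_eq_one, Equiv.Perm.coe_one]

theorem Set.SurjOn.exists_iterate_eqOn_id {α : Type*} {f : α → α} {s : Set α}
    (hs : s.Finite) (hmaps : Set.MapsTo f s s) (hsurj : Set.SurjOn f s s) :
    ∃ n, 0 < n ∧ Set.EqOn f^[n] id s := by
  have : Finite s := hs.to_subtype
  obtain ⟨n, hn, hid⟩ := (hmaps.restrict_surjective_iff.mpr hsurj).exists_iterate_eq_id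
  refine ⟨n, hn, fun x hx => ?_⟩
  rw [← hmaps.coe_iterate_restrict ⟨x, hx⟩, hid, id, id]

theorem Atom.vars_map (h : V → W) (a : Atom σ ρ V) : (a.map h).vars = h '' a.vars :=
  Set.range_comp h a.args

theorem qvars_image (h : V → W) (C : Set (Atom σ ρ V)) :
    qvars (Atom.map h '' C) = h '' qvars C := by
  simp only [qvars, Set.biUnion_image, Atom.vars_map, Set.image_iUnion₂]

theorem qvars_finite {Q : Set (Atom σ ρ V)} (hQ : Q.Finite) : (qvars Q).Finite :=
  hQ.biUnion fun a _ => Set.finite_range a.args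

theorem IsHom.comp_s4 {U : Type*} {f : U → V} {g : V → W} {Q : Set (Atom σ ρ U)}
    {D : Set (Atom σ ρ V)} {E : Set (Atom σ ρ W)} (hg : IsHom g D E) (hf : IsHom f Q D) :
    IsHom (g ∘ f) Q E :=
  fun a ha => hg _ (hf a ha)

theorem IsHom.mono_left {h : V → W} {Q Q' : Set (Atom σ ρ V)} {D : Set (Atom σ ρ W)}
    (hh : IsHom h Q D) (hQ' : Q' ⊆ Q) : IsHom h Q' D :=
  fun a ha => hh a (hQ' ha)

theorem IsHom.iterate_s4 {h : V → V} {Q : Set (Atom σ ρ V)} (hh : IsHom h Q Q) :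
    ∀ n, IsHom h^[n] Q Q
  | 0 => fun _ ha => ha
  | n + 1 => (hh.iterate_s4 n).comp_s4 hh

theorem IsHom.image_subset {h : V → W} {Q : Set (Atom σ ρ V)} {D : Set (Atom σ ρ W)}
    (hh : IsHom h Q D) : Atom.map h '' Q ⊆ D := by
  rintro _ ⟨a, ha, rfl⟩
  exact hh a ha

namespace IsCore

variable {Q C : Set (Atom σ ρ V)}

theorem image_eq (hC : IsCore Q C) {h : V → V} (hh : IsHom h Q C) : Atom.map h '' C = C :=
  hC.2.2 _ (hh.image_subset.trans' (Set.image_mono hC.1)) ⟨h ∘ h, fun a ha =>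
    Set.mem_image_of_mem _ (hh a ha)⟩

theorem exists_retraction (hQ : Q.Finite) (hC : IsCore Q C) :
    ∃ r : V → V, IsHom r Q C ∧ Set.EqOn r id (qvars C) := by
  obtain ⟨h, hh⟩ := hC.2.1
  have himage : h '' qvars C = qvars C := by rw [← qvars_image, hC.image_eq hh]
  obtain ⟨n, hn, hfix⟩ := Set.SurjOn.exists_iterate_eqOn_id
    ((qvars_finite hQ).subset (Set.biUnion_subset_biUnion_left hC.1))
    (Set.mapsTo_iff_image_subset.mpr himage.subset) himage.symm.subset
  obtain ⟨m, rfl⟩ : ∃ m, n = m + 1 := ⟨n - 1, by omega⟩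
  refine ⟨h^[m + 1], ?_, hfix⟩
  rw [Function.iterate_succ]
  exact ((hh.mono_left hC.1).iterate_s4 m).comp_s4 hh

theorem insert_fresh (hC : IsCore Q C) (a₀ : Atom σ ρ V) (hfresh : ∀ a ∈ Q, a.rel ≠ a₀.rel)
    {h : V → V} (hh : IsHom h Q C) (hfix : a₀.map h = a₀) :
    IsCore (insert a₀ Q) (insert a₀ C) := by
  refine ⟨Set.insert_subset_insert hC.1, ⟨h, ?_⟩, ?_⟩
  · rintro a (rfl | ha)
    · rw [hfix]
      exact Set.mem_insert _ _
    · exact Set.mem_insert_of_mem _ (hh a ha)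
  · rintro C' hC' ⟨f, hf⟩
    have ha₀ : a₀ ∈ C' := by
      have hfa₀ := hf a₀ (Set.mem_insert _ _)
      rcases hC' hfa₀ with heq | hmem
      · exact heq ▸ hfa₀
      · exact (hfresh _ (hC.1 hmem) rfl).elim
    have hrest : {a ∈ C' | a.rel ≠ a₀.rel} = C := by
      refine hC.2.2 _ ?_ ⟨f, fun a ha => ⟨hf a (Set.mem_insert_of_mem _ ha), hfresh a ha⟩⟩
      rintro a ⟨haC', hrel⟩
      exact (hC' haC').resolve_left (by rintro rfl; exact hrel rfl)
    exact hC'.antisymm (Set.insert_subset ha₀ (hrest ▸ Set.sep_subset _ _))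

end IsCore

/-- The set `O` is encoded as the range of the tuple `t`, the arguments of the new atom over the
fresh relation symbol `r₀`. -/
theorem stmt4 {σ : Type*} {ρ : σ → ℕ} {V : Type*} (Q C : Set (Atom σ ρ V))
    (hfin : Q.Finite) (hcore : IsCore Q C) (q : Atom σ ρ V) (hq : q ∈ C)
    (r₀ : σ) (hfresh : ∀ a ∈ Q, a.rel ≠ r₀) (t : Fin (ρ r₀) → V)
    (ht : Set.range t ⊆ Set.range q.args) :
    IsCore (insert ⟨r₀, t⟩ Q) (insert ⟨r₀, t⟩ C) := by
  obtain ⟨r, hr, hfix⟩ := hcore.exists_retraction hfin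
  have htC : Set.range t ⊆ qvars C := ht.trans (Set.subset_biUnion_of_mem (u := Atom.vars) hq)
  refine hcore.insert_fresh ⟨r₀, t⟩ hfresh hr ?_
  exact congrArg (Atom.mk r₀) (funext fun i => hfix (htC ⟨i, rfl⟩))
end

section
/- Let q be an atom in some core Q' of Q for which (H_{Q'}, H_V) has a tree projection. Then for every O ⊆ vars(q), O is tp-covered in Q with respect to V (i.e., some core of Q ∧ atom(O) has a tree projection w.r.t. H_V). -/
variable {σ : Type*} {ρ : σ → ℕ} {V W : Type*}

def hgle {α : Type*} (H1 H2 : Set (Set α)) : Prop :=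
  ∀ e ∈ H1, ∃ f ∈ H2, e ⊆ f

def HGAcyclic {α : Type*} (H : Set (Set α)) : Prop :=
  ∃ T : SimpleGraph H, T.Connected ∧ T.IsAcyclic ∧
    ∀ (x : α) (u v : H) (hu : x ∈ (u : Set α)) (hv : x ∈ (v : Set α)),
      (T.induce {w : H | x ∈ (w : Set α)}).Reachable ⟨u, hu⟩ ⟨v, hv⟩

def HasTP {α : Type*} (H1 H2 : Set (Set α)) : Prop :=
  ∃ Ha, HGAcyclic Ha ∧ hgle H1 Ha ∧ hgle Ha H2

def queryHG {σ : Type*} {ρ : σ → ℕ} {V : Type*} (Q : Set (Atom σ ρ V)) : Set (Set V) :=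
  { s | ∃ a ∈ Q, s = a.vars }

/-!
By minimality of the core, a homomorphism `h : Q → Q'` maps `Q'` onto itself, so it permutes
the finite set `Q'` and some iterate `r` of `h` is a retraction of `Q` onto `Q'`. As `r` fixes
every variable of `q`, it fixes `atom(O)` and maps `Q ∧ atom(O)` into `Q' ∧ atom(O)`, which
therefore contains a core `C` of `Q ∧ atom(O)`. Every atom of `C` is covered by an atom of `Q'`
(the fresh one by `q`), so a tree projection of `(H_{Q'}, H_V)` is one of `(H_C, H_V)` too.
-/

open Set Function

theorem Set.Finite.exists_iterate_eqOn_id_of_surjOn {α : Type*} {s : Set α} {f : α → α}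
    (hs : s.Finite) (hmaps : MapsTo f s s) (hsurj : SurjOn f s s) :
    ∃ n, 0 < n ∧ EqOn f^[n] id s := by
  have : Fintype s := hs.fintype
  have hinj : Injective (hmaps.restrict f s s) :=
    hmaps.restrict_inj.2 ((hs.surjOn_iff_bijOn_of_mapsTo hmaps).1 hsurj).injOn
  refine ⟨(Fintype.card s).factorial, Nat.factorial_pos _, fun x hx => ?_⟩
  have := congrFun (injective_iff_iterate_factorial_card_eq_id.1 hinj) ⟨x, hx⟩
  simpa [MapsTo.iterate_restrict] using congrArg Subtype.val this

namespace Atom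

variable {σ : Type*} {ρ : σ → ℕ} {V : Type*}

theorem map_iterate (f : V → V) (a : Atom σ ρ V) (n : ℕ) :
    a.map f^[n] = (Atom.map f)^[n] a := by
  induction n with
  | zero => rfl
  | succ n ih => rw [iterate_succ', iterate_succ_apply', ← ih]; rfl

theorem map_eq_self_iff (f : V → V) (a : Atom σ ρ V) :
    a.map f = a ↔ ∀ x ∈ a.vars, f x = x := by
  cases a
  simp [Atom.map, Atom.vars, funext_iff]

end Atom

section Hypergraphs

variable {α : Type*} {H₁ H₂ H₃ : Set (Set α)}

theorem hgle.trans (h₁₂ : hgle H₁ H₂) (h₂₃ : hgle H₂ H₃) : hgle H₁ H₃ := by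
  intro e he
  obtain ⟨f, hf, hef⟩ := h₁₂ e he
  obtain ⟨g, hg, hfg⟩ := h₂₃ f hf
  exact ⟨g, hg, hef.trans hfg⟩

theorem HasTP.mono_left (htp : HasTP H₂ H₃) (h₁₂ : hgle H₁ H₂) : HasTP H₁ H₃ := by
  obtain ⟨Ha, hac, h₂a, ha₃⟩ := htp
  exact ⟨Ha, hac, h₁₂.trans h₂a, ha₃⟩

end Hypergraphs

section Queries

variable {σ : Type*} {ρ : σ → ℕ} {V : Type*} {Q C D : Set (Atom σ ρ V)}

theorem hgle_queryHG_of_subset (hCD : C ⊆ D) : hgle (queryHG C) (queryHG D) := by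
  rintro _ ⟨a, ha, rfl⟩
  exact ⟨a.vars, ⟨a, hCD ha, rfl⟩, subset_rfl⟩

theorem hgle_queryHG_insert {a b : Atom σ ρ V} (hb : b ∈ Q) (hab : a.vars ⊆ b.vars) :
    hgle (queryHG (insert a Q)) (queryHG Q) := by
  rintro _ ⟨c, hc | hc, rfl⟩
  · exact ⟨b.vars, ⟨b, hb, rfl⟩, hc ▸ hab⟩
  · exact ⟨c.vars, ⟨c, hc, rfl⟩, subset_rfl⟩

theorem exists_isCore_subset (hQ : Q.Finite) (hDQ : D ⊆ Q) (hD : ∃ h : V → V, IsHom h Q D) :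
    ∃ C ⊆ D, IsCore Q C := by
  let S := {C | C ⊆ D ∧ ∃ h : V → V, IsHom h Q C}
  have hS : S.Finite := (hQ.subset hDQ).finite_subsets.subset fun _ hC => hC.1
  obtain ⟨C, ⟨hCD, hC⟩, hmin⟩ := hS.exists_minimal ⟨D, subset_rfl, hD⟩
  exact ⟨C, hCD, hCD.trans hDQ, hC, fun C' hC' h' => hC'.antisymm (hmin ⟨hC'.trans hCD, h'⟩ hC')⟩

theorem IsCore.exists_retraction_s6 (hC : IsCore Q C) (hfin : C.Finite) :
    ∃ r : V → V, IsHom r Q C ∧ ∀ a ∈ C, a.map r = a := by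
  obtain ⟨hCQ, ⟨h, hh⟩, hmin⟩ := hC
  have hmaps : MapsTo (Atom.map h) C C := fun a ha => hh a (hCQ ha)
  have himage : Atom.map h '' C = C :=
    hmin _ hmaps.image_subset ⟨h ∘ h, fun a ha => ⟨a.map h, hh a ha, rfl⟩⟩
  obtain ⟨n, hn, hfix⟩ := hfin.exists_iterate_eqOn_id_of_surjOn hmaps himage.symm.subset
  obtain ⟨m, rfl⟩ : ∃ m, n = m + 1 := ⟨n - 1, by omega⟩
  refine ⟨h^[m + 1], fun a ha => ?_, fun a ha => ?_⟩
  · rw [Atom.map_iterate, iterate_succ_apply]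
    exact hmaps.iterate _ (hh a ha)
  · rw [Atom.map_iterate]
    exact hfix ha

end Queries

theorem stmt6_general {σ : Type*} {ρ : σ → ℕ} {V : Type*} (Q Q' : Set (Atom σ ρ V))
    (HV : Set (Set V)) (hfin : Q.Finite) (hcore : IsCore Q Q')
    (htp : HasTP (queryHG Q') HV) (q : Atom σ ρ V) (hq : q ∈ Q')
    (r₀ : σ) (t : Fin (ρ r₀) → V)
    (ht : Set.range t ⊆ Set.range q.args) :
    ∃ C : Set (Atom σ ρ V), IsCore (insert ⟨r₀, t⟩ Q) C ∧ HasTP (queryHG C) HV := by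
  obtain ⟨r, hr, hfix⟩ := hcore.exists_retraction_s6 (hfin.subset hcore.1)
  have hr₀ : (⟨r₀, t⟩ : Atom σ ρ V).map r = ⟨r₀, t⟩ :=
    (Atom.map_eq_self_iff r _).2 fun x hx => (Atom.map_eq_self_iff r q).1 (hfix q hq) x (ht hx)
  have hhom : IsHom r (insert ⟨r₀, t⟩ Q) (insert ⟨r₀, t⟩ Q') := by
    rintro a (rfl | ha)
    · rw [hr₀]
      exact mem_insert _ _
    · exact mem_insert_of_mem _ (hr a ha)
  obtain ⟨C, hCsub, hC⟩ :=
    exists_isCore_subset (hfin.insert _) (insert_subset_insert hcore.1) ⟨r, hhom⟩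
  exact ⟨C, hC, htp.mono_left ((hgle_queryHG_of_subset hCsub).trans (hgle_queryHG_insert hq ht))⟩

/-- if `q` is an atom of a core `Q'` of `Q` such that `(H_{Q'}, H_V)` has a
tree projection, then every `O ⊆ vars(q)` (enumerated by the tuple `t` of the fresh
symbol `r₀`) is tp-covered in `Q` w.r.t. `V`. -/
theorem stmt6 {σ : Type*} {ρ : σ → ℕ} {V : Type*} (Q Q' : Set (Atom σ ρ V))
    (HV : Set (Set V)) (hfin : Q.Finite) (hcore : IsCore Q Q')
    (htp : HasTP (queryHG Q') HV) (q : Atom σ ρ V) (hq : q ∈ Q')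
    (r₀ : σ) (hfresh : ∀ a ∈ Q, a.rel ≠ r₀) (t : Fin (ρ r₀) → V)
    (ht : Set.range t ⊆ Set.range q.args) :
    ∃ C : Set (Atom σ ρ V), IsCore (insert ⟨r₀, t⟩ Q) C ∧ HasTP (queryHG C) HV :=
  stmt6_general Q Q' HV hfin hcore htp q hq r₀ t ht
end

section
/- In the Robber and Captain game, if the Captain plays a greedy move from configuration (h_p, M_p, C_p) with h_p ∩ C_p ≠ ∅, choosing M_r = M_p ∪ (h_p ∩ C_p), then every resulting [M_r]-component C_r reachable by the robber satisfies C_r ⊆ C_p and C_r ∩ h_p = ∅ (C_r is an [h_p]-component). -/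
/-- The nodes of a hypergraph. -/
def hgNodes {α : Type*} (H : Set (Set α)) : Set α := ⋃₀ H

/-- The frontier `F(C)` of a set of nodes `C`: the union of all hyperedges meeting `C`. -/
def hgFrontier {α : Type*} (H : Set (Set α)) (C : Set α) : Set α :=
  ⋃₀ {h ∈ H | (h ∩ C).Nonempty}

/-- `[M]`-adjacency: some hyperedge contains both nodes, outside `M`. -/
def adjM {α : Type*} (H : Set (Set α)) (M : Set α) (X Y : α) : Prop :=
  ∃ h ∈ H, X ∈ h ∧ Y ∈ h ∧ X ∉ M ∧ Y ∉ M

/-- `C` is an `[M]`-component of `H`: the set of nodes `[M]`-connected to some node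
outside `M`. -/
def IsComp {α : Type*} (H : Set (Set α)) (M C : Set α) : Prop :=
  ∃ X ∈ hgNodes H, X ∉ M ∧ C = {Y | Relation.ReflTransGen (adjM H M) X Y}

namespace IsComp

variable {α : Type*} {H : Set (Set α)} {M C : Set α}

theorem nonempty (hC : IsComp H M C) : C.Nonempty := by
  obtain ⟨X, -, -, rfl⟩ := hC
  exact ⟨X, Relation.ReflTransGen.refl⟩

theorem disjoint (hC : IsComp H M C) : Disjoint C M := by
  obtain ⟨X, -, hX, rfl⟩ := hC
  refine Set.disjoint_left.mpr fun Y hY => ?_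
  cases hY with
  | refl => exact hX
  | tail _ hadj => exact hadj.choose_spec.2.2.2.2

theorem mem_of_reflTransGen (hC : IsComp H M C) {X Y : α} (hX : X ∈ C)
    (hXY : Relation.ReflTransGen (adjM H M) X Y) : Y ∈ C := by
  obtain ⟨Z, -, -, rfl⟩ := hC
  exact Relation.ReflTransGen.trans hX hXY

end IsComp

theorem stmt13_general {α : Type*} (H : Set (Set α)) (hp Mp Cp Mr Cr : Set α)
    (hCp : IsComp H Mp Cp)
    (hMr : Mr = Mp ∪ (hp ∩ Cp)) (hCr : IsComp H Mr Cr)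
    (hconn : ∀ X ∈ Cp ∪ Cr, ∀ Y ∈ Cp ∪ Cr,
      Relation.ReflTransGen (adjM H (Mp ∩ Mr)) X Y) :
    Cr ⊆ Cp ∧ Cr ∩ hp = ∅ := by
  have hMp : Mp ∩ Mr = Mp := Set.inter_eq_left.mpr (hMr ▸ Set.subset_union_left)
  obtain ⟨X, hX⟩ := hCp.nonempty
  have hsub : Cr ⊆ Cp := fun Y hY =>
    hCp.mem_of_reflTransGen hX (hMp ▸ hconn X (Or.inl hX) Y (Or.inr hY))
  refine ⟨hsub, Set.eq_empty_iff_forall_notMem.mpr fun Y ⟨hYCr, hYhp⟩ => ?_⟩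
  exact Set.disjoint_left.mp hCr.disjoint hYCr (hMr ▸ Or.inr ⟨hYhp, hsub hYCr⟩)

/-- a greedy move from configuration `(h_p, M_p, C_p)` with
`h_p ∩ C_p ≠ ∅`, choosing `M_r = M_p ∪ (h_p ∩ C_p)`: every `[M_r]`-component `C_r`
reachable by the Robber (i.e. with `C_p ∪ C_r` `[M_p ∩ M_r]`-connected) satisfies
`C_r ⊆ C_p` and `C_r ∩ h_p = ∅`. -/
theorem stmt13 {α : Type*} (H : Set (Set α)) (hp Mp Cp Mr Cr : Set α)
    (hMphp : Mp ⊆ hp) (hCp : IsComp H Mp Cp) (hne : (hp ∩ Cp).Nonempty)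
    (hMr : Mr = Mp ∪ (hp ∩ Cp)) (hCr : IsComp H Mr Cr)
    (hconn : ∀ X ∈ Cp ∪ Cr, ∀ Y ∈ Cp ∪ Cr,
      Relation.ReflTransGen (adjM H (Mp ∩ Mr)) X Y) :
    Cr ⊆ Cp ∧ Cr ∩ hp = ∅ :=
  stmt13_general H hp Mp Cp Mr Cr hCp hMr hCr hconn
end
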